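/- Let λ ~ Uniform[0,1], and given λ let n ~ Binomial(N, λ) and k ~ Bernoulli(λ) be conditionally independent. Define P_N = (n+1)/(N+2) if k = 1 and (N−n+1)/(N+2) if k = 0. Then E[P_N] = (2N+3)/(3(N+2)); in particular E[P_N] → 2/3 as N → ∞. -/
import Mathlib


open MeasureTheory

lemma bern_sum (N : ℕ) (l : ℝ) :
    ∑ j ∈ Finset.range (N + 1), (N.choose j : ℝ) * l ^ j * (1 - l) ^ (N - j) = 1 := by
  have h := bernsteinPolynomial.sum ℝ N
  have := congrArg (Polynomial.eval l) h
  simpa [bernsteinPolynomial, Polynomial.eval_finset_sum] using this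

lemma bern_sum_smul (N : ℕ) (l : ℝ) :
    ∑ j ∈ Finset.range (N + 1), (j : ℝ) * ((N.choose j : ℝ) * l ^ j * (1 - l) ^ (N - j))
      = (N : ℝ) * l := by
  have h := bernsteinPolynomial.sum_smul ℝ N
  have := congrArg (Polynomial.eval l) h
  simpa [bernsteinPolynomial, Polynomial.eval_finset_sum, mul_assoc] using this

/-- With λ ~ Uniform[0,1], n | λ ~ Binomial(N, λ) and k | λ ~ Bernoulli(λ) conditionally
independent, the Mira statistic P_N = (n+1)/(N+2) if k=1 and (N-n+1)/(N+2) if k=0 satisfies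
E[P_N] = (2N+3)/(3(N+2)); in particular E[P_N] → 2/3 as N → ∞. -/
theorem stmt5 (N : ℕ) (hN : 0 < N) :
    (∫ l in (0:ℝ)..1, ∑ j ∈ Finset.range (N + 1),
      (N.choose j : ℝ) * l ^ j * (1 - l) ^ (N - j) *
        (l * (((j : ℝ) + 1) / ((N : ℝ) + 2))
          + (1 - l) * (((N : ℝ) - (j : ℝ) + 1) / ((N : ℝ) + 2))))
      = (2 * (N : ℝ) + 3) / (3 * ((N : ℝ) + 2)) ∧
    Filter.Tendsto (fun M : ℕ => (2 * (M : ℝ) + 3) / (3 * ((M : ℝ) + 2)))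
      Filter.atTop (nhds (2 / 3)) := by
  have hN2 : ((N : ℝ) + 2) ≠ 0 := by positivity
  constructor
  · have key : ∀ l : ℝ, (∑ j ∈ Finset.range (N + 1),
        (N.choose j : ℝ) * l ^ j * (1 - l) ^ (N - j) *
          (l * (((j : ℝ) + 1) / ((N : ℝ) + 2))
            + (1 - l) * (((N : ℝ) - (j : ℝ) + 1) / ((N : ℝ) + 2))))
        = (2 * N * l ^ 2 - 2 * N * l + N + 1) / ((N : ℝ) + 2) := by
      intro l
      have expand : ∀ j ∈ Finset.range (N + 1),
          (N.choose j : ℝ) * l ^ j * (1 - l) ^ (N - j) *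
            (l * (((j : ℝ) + 1) / ((N : ℝ) + 2))
              + (1 - l) * (((N : ℝ) - (j : ℝ) + 1) / ((N : ℝ) + 2)))
          = ((2 * l - 1) / ((N : ℝ) + 2)) *
              ((j : ℝ) * ((N.choose j : ℝ) * l ^ j * (1 - l) ^ (N - j)))
            + ((l + (1 - l) * ((N : ℝ) + 1)) / ((N : ℝ) + 2)) *
              ((N.choose j : ℝ) * l ^ j * (1 - l) ^ (N - j)) := by
        intro j _; ring
      rw [Finset.sum_congr rfl expand, Finset.sum_add_distrib, ← Finset.mul_sum,
        ← Finset.mul_sum, bern_sum, bern_sum_smul]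
      field_simp
      ring
    simp only [key]
    have hi : (∫ l in (0:ℝ)..1, (2 * (N:ℝ) * l ^ 2 - 2 * N * l + N + 1) / ((N : ℝ) + 2))
        = (∫ l in (0:ℝ)..1, (2 * (N:ℝ) * l ^ 2 - 2 * N * l + (N + 1))) * ((N:ℝ) + 2)⁻¹ := by
      rw [← intervalIntegral.integral_mul_const]
      congr 1; funext l; ring
    rw [hi]
    have h1 : (∫ l in (0:ℝ)..1, (2 * (N:ℝ) * l ^ 2 - 2 * N * l + (N + 1)))
        = 2 * (N:ℝ) * (1/3) - 2 * N * (1/2) + (N + 1) := by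
      have i1 : IntervalIntegrable (fun l : ℝ => 2 * (N:ℝ) * l ^ 2) MeasureTheory.volume 0 1 := by
        apply Continuous.intervalIntegrable; fun_prop
      have i2 : IntervalIntegrable (fun l : ℝ => 2 * (N:ℝ) * l) MeasureTheory.volume 0 1 := by
        apply Continuous.intervalIntegrable; fun_prop
      have i3 : IntervalIntegrable (fun _ : ℝ => (N:ℝ) + 1) MeasureTheory.volume 0 1 :=
        intervalIntegrable_const
      rw [intervalIntegral.integral_add (i1.sub i2) i3, intervalIntegral.integral_sub i1 i2,
        intervalIntegral.integral_const_mul, intervalIntegral.integral_const_mul,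
        intervalIntegral.integral_const, integral_pow]
      norm_num [integral_id]
    rw [h1]
    field_simp
    ring
  · have h0 : Filter.Tendsto (fun M : ℕ => (3 * ((M : ℝ) + 2))⁻¹) Filter.atTop (nhds 0) := by
      apply Filter.Tendsto.inv_tendsto_atTop
      apply Filter.Tendsto.const_mul_atTop (by norm_num : (0:ℝ) < 3)
      exact Filter.tendsto_atTop_add_const_right _ _ tendsto_natCast_atTop_atTop
    have heq : ∀ M : ℕ, (2 * (M : ℝ) + 3) / (3 * ((M : ℝ) + 2))
        = 2 / 3 - (3 * ((M : ℝ) + 2))⁻¹ := by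
      intro M
      have : ((M : ℝ) + 2) ≠ 0 := by positivity
      field_simp
      ring
    simp only [heq]
    have := (tendsto_const_nhds (x := (2:ℝ)/3) (f := Filter.atTop (α := ℕ))).sub h0
    simpa using this
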